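/- The map ∂Γ^2 satisfies the Leibniz rule on products: ∂Γ^2_{yx}(στ) = (∂Γ^2_{yx}σ)·(Γ^2_{yx}τ) + (Γ^2_{yx}σ)·(∂Γ^2_{yx}τ), assuming D_Ξ is a derivation, Δ̂_2 is multiplicative, Γ^2_{yx} and f_x^2 are characters (multiplicative), and Δ̂_2 σ = σ⊗1 for σ without Ξ̇. -/
import Mathlib


open scoped TensorProduct

/-- the pairing `(Γ ⊗ f)` composed with `V ⊗ ℝ ≃ V`. -/
noncomputable def pairMap {V : Type*} [CommRing V] [Algebra ℝ V]
    (Γ : V →ₐ[ℝ] V) (f : V →ₐ[ℝ] ℝ) : V ⊗[ℝ] V →ₗ[ℝ] V :=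
  (TensorProduct.rid ℝ V).toLinearMap ∘ₗ
    TensorProduct.map Γ.toLinearMap f.toLinearMap

theorem pairMap_mul_tmul_one {V : Type*} [CommRing V] [Algebra ℝ V]
    (Γ : V →ₐ[ℝ] V) (f : V →ₐ[ℝ] ℝ) (x : V ⊗[ℝ] V) (a : V) :
    pairMap Γ f (x * (a ⊗ₜ[ℝ] 1)) = pairMap Γ f x * Γ a := by
  induction x using TensorProduct.induction_on with
  | zero => simp
  | tmul b c =>
      simp [pairMap, Algebra.TensorProduct.tmul_mul_tmul, mul_comm, mul_assoc,
        Algebra.mul_smul_comm, Algebra.smul_mul_assoc]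
  | add x y hx hy => simp [add_mul, hx, hy]

/-- Leibniz rule for `∂Γ²`.  With
`∂Γ²_{yx}τ = (Γ²_{yx}⊗f_x²)Δ̂₂D_Ξτ`, `D_Ξ` a derivation, `Δ̂₂` multiplicative,
`Γ²_{yx}` and `f_x²` characters, and `Δ̂₂σ = σ⊗1` for σ, τ without `Ξ̇`, one has
`∂Γ²_{yx}(στ) = (∂Γ²_{yx}σ)·(Γ²_{yx}τ) + (Γ²_{yx}σ)·(∂Γ²_{yx}τ)`. -/
theorem stmt15 {V : Type*} [CommRing V] [Algebra ℝ V]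
    (Dxi : V →ₗ[ℝ] V)
    (Δh : V →ₗ[ℝ] V ⊗[ℝ] V)
    (Γ : V →ₐ[ℝ] V) (f : V →ₐ[ℝ] ℝ)
    (hD : ∀ a b : V, Dxi (a * b) = Dxi a * b + a * Dxi b)
    (hΔmul : ∀ a b : V, Δh (a * b) = Δh a * Δh b)
    (σ τ : V)
    (hσ : Δh σ = σ ⊗ₜ[ℝ] 1) (hτ : Δh τ = τ ⊗ₜ[ℝ] 1) :
    pairMap Γ f (Δh (Dxi (σ * τ)))
      = pairMap Γ f (Δh (Dxi σ)) * Γ τ + Γ σ * pairMap Γ f (Δh (Dxi τ)) := by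
  have h : Δh (Dxi (σ * τ)) = Δh (Dxi σ) * (τ ⊗ₜ[ℝ] 1) + (σ ⊗ₜ[ℝ] 1) * Δh (Dxi τ) := by
    rw [hD, map_add, hΔmul, hΔmul, hσ, hτ]
  rw [h, map_add, pairMap_mul_tmul_one]
  congr 1
  rw [mul_comm ((σ : V) ⊗ₜ[ℝ] (1 : V)) _, pairMap_mul_tmul_one, mul_comm]
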